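/- Assume the modular upper-bound system H satisfies sequential solvency and let (≻_i)_{i∈I} be a strict preference profile. Define an allocation a recursively in priority order: for k = 1,…,n, a_{i_k} is the ≻_{i_k}-greatest element of F_k = {s ∈ S : |{j < k : a_{i_j} = s}| < q_s and every h ∈ H^{s, t_{i_k}} satisfies |{j < k : a_{i_j} ∈ S_h and t_{i_j} ∈ Ξ_h}| < k_h}. Then F_k ≠ ∅ for every k, and the resulting allocation a is feasible, respects H, and is constrained Pareto efficient with respect to (≻_i)_{i∈I}. (This is the outcome of the Dynamic Modular Priority Mechanism under truthful reporting.) -/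
import Mathlib


attribute [local instance] Classical.propDecidable

section Defs

variable {S T : Type*} {n : ℕ}

/-- A message is an irreflexive and acyclic binary relation on states. -/
def IsMessage (r : S → S → Prop) : Prop :=
  (∀ s, ¬ r s s) ∧ (∀ s, ¬ Relation.TransGen r s s)

/-- A strict preference: asymmetric, transitive and total (complete) relation. -/
def IsStrictPref (p : S → S → Prop) : Prop :=
  (∀ s s', p s s' → ¬ p s' s) ∧
  (∀ s s' s'', p s s' → p s' s'' → p s s'') ∧
  (∀ s s', s ≠ s' → p s s' ∨ p s' s)

/-- The weak part of a strict preference. -/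
def weakPref (p : S → S → Prop) (s s' : S) : Prop := p s s' ∨ s = s'

/-- A message `r` is truthful for a preference `p`. -/
def Truthful (p r : S → S → Prop) : Prop := ∀ s s', r s s' → p s s'

/-- Two states are comparable under a message. -/
def Cmp (r : S → S → Prop) (s s' : S) : Prop := s = s' ∨ r s s' ∨ r s' s

/-- Feasibility of an allocation with respect to capacities. -/
def Feasible (q : S → ℕ) (a : Fin n → S) : Prop :=
  ∀ s, (Finset.univ.filter fun i => a i = s).card ≤ q s

/-- Visible unfairness of allocation `a` under message profile `m`
(officer `i` has higher priority than `j` iff `i < j`). -/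
def VisiblyUnfair (q : S → ℕ) (m : Fin n → S → S → Prop) (a : Fin n → S) : Prop :=
  ∃ i : Fin n,
    (∃ j : Fin n, a i ≠ a j ∧ i < j ∧ m i (a j) (a i)) ∨
    (∃ s : S, a i ≠ s ∧ (Finset.univ.filter fun j => a j = s).card < q s ∧ m i s (a i))

/-- `G(X, r)`: the set of `r`-maximal (undominated) elements of `X`. -/
def maxSet (r : S → S → Prop) (X : Set S) : Set S :=
  {s | s ∈ X ∧ ∀ s' ∈ X, ¬ r s' s}

/-- `S^k(a)`: states whose capacity is not exhausted by the officers ranked above `k`. -/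
def remStates (q : S → ℕ) (a : Fin n → S) (k : Fin n) : Set S :=
  {s | (Finset.univ.filter fun j => j < k ∧ a j = s).card < q s}

/-- A mechanism is visibly fair on message spaces `M`. -/
def VisiblyFair (q : S → ℕ) (M : Fin n → Set (S → S → Prop))
    (ψ : (Fin n → S → S → Prop) → Fin n → S) : Prop :=
  ∀ m, (∀ i, m i ∈ M i) → ¬ VisiblyUnfair q m (ψ m)

/-- Strategy-proofness. -/
def StrategyProof (M : Fin n → Set (S → S → Prop))
    (ψ : (Fin n → S → S → Prop) → Fin n → S) : Prop :=
  ∀ (i : Fin n) (p : S → S → Prop), IsStrictPref p →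
    ∀ m, (∀ j, m j ∈ M j) → Truthful p (m i) →
      ∀ mh ∈ M i, weakPref p (ψ m i) (ψ (Function.update m i mh) i)

/-- Expressiveness. -/
def Expressive (M : Fin n → Set (S → S → Prop))
    (ψ : (Fin n → S → S → Prop) → Fin n → S) : Prop :=
  ∀ (i : Fin n) (m : Fin n → S → S → Prop), (∀ j, m j ∈ M j) →
    ∀ mh ∈ M i, Cmp (m i) (ψ (Function.update m i mh) i) (ψ m i)

/-- State `s` is available to officer `i` under allocation `a`. -/
def AvailState (q : S → ℕ) (a : Fin n → S) (i : Fin n) (s : S) : Prop :=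
  (Finset.univ.filter fun j => a j = s ∧ j < i).card < q s

/-- Availability. -/
def Availability (q : S → ℕ) (M : Fin n → Set (S → S → Prop))
    (ψ : (Fin n → S → S → Prop) → Fin n → S) : Prop :=
  ∀ (i : Fin n) (m : Fin n → S → S → Prop), (∀ j, m j ∈ M j) →
    ∀ mh ∈ M i, AvailState q (ψ m) i (ψ (Function.update m i mh) i)

/-- Weak availability. -/
def WeakAvailability (q : S → ℕ) (M : Fin n → Set (S → S → Prop))
    (ψ : (Fin n → S → S → Prop) → Fin n → S) : Prop :=
  ∀ (i : Fin n) (p : S → S → Prop), IsStrictPref p →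
    ∀ m, (∀ j, m j ∈ M j) → Truthful p (m i) →
      ∀ mh ∈ M i, weakPref p (ψ (Function.update m i mh) i) (ψ m i) →
        AvailState q (ψ m) i (ψ (Function.update m i mh) i)

/-- Coherence. -/
def Coherent (M : Fin n → Set (S → S → Prop))
    (ψ : (Fin n → S → S → Prop) → Fin n → S) : Prop :=
  ∀ (i : Fin n) (m : Fin n → S → S → Prop), (∀ j, m j ∈ M j) →
    ∀ mh ∈ M i, ψ (Function.update m i mh) i ≠ ψ m i →
      ψ (Function.update m i mh) i ∉
        maxSet (m i) {ψ m i, ψ (Function.update m i mh) i}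

/-- Two states lie in a common zone of `Z`. -/
def SameZone (Z : Set (Set S)) (s s' : S) : Prop := ∃ z ∈ Z, s ∈ z ∧ s' ∈ z

/-- A zonal message space with zones `Z`. -/
def ZonalSpace (Z : Set (Set S)) (M : Set (S → S → Prop)) : Prop :=
  (∀ r ∈ M, ∀ s s', (SameZone Z s s' → Cmp r s s') ∧ (¬ SameZone Z s s' → ¬ Cmp r s s')) ∧
  (∀ R : S → S → Prop, IsStrictPref R →
    ∃ r ∈ M, ∀ z ∈ Z, ∀ s ∈ z, ∀ s' ∈ z, s ≠ s' → (R s s' ↔ r s s'))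

/-- Visible efficiency of a feasible allocation `a` under message profile `m`. -/
def VisEff (q : S → ℕ) (m : Fin n → S → S → Prop) (a : Fin n → S) : Prop :=
  ¬ ∃ a' : Fin n → S, a' ≠ a ∧ Feasible q a' ∧ ∀ i, a' i ≠ a i → m i (a' i) (a i)

/-- Pareto efficiency with respect to a strict preference profile. -/
def ParetoEff (q : S → ℕ) (p : Fin n → S → S → Prop) (a : Fin n → S) : Prop :=
  ¬ ∃ a' : Fin n → S, a' ≠ a ∧ Feasible q a' ∧ ∀ i, a' i ≠ a i → p i (a' i) (a i)

end Defs

section Modular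

variable {S T : Type*} {n : ℕ}

/-- A modular upper-bound: a set of types, a set of states and a ceiling. -/
structure UB (S T : Type*) where
  types : Set T
  states : Set S
  cap : ℕ

/-- A modular upper-bound system: every set of covered types is nonempty. -/
def UBSystem (H : Set (UB S T)) : Prop := H.Finite ∧ ∀ h ∈ H, h.types.Nonempty

/-- An allocation respects the modular upper-bound system `H`. -/
def RespectsUB (H : Set (UB S T)) (t : Fin n → T) (a : Fin n → S) : Prop :=
  ∀ h ∈ H, (Finset.univ.filter fun i => a i ∈ h.states ∧ t i ∈ h.types).card ≤ h.cap

/-- The upper-bound signature `H^{s,t}` of a state for a type. -/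
def ubSig (H : Set (UB S T)) (τ : T) (s : S) : Set (UB S T) :=
  {h | h ∈ H ∧ s ∈ h.states ∧ τ ∈ h.types}

/-- The modular-induced zone of state `s` for type `τ`: all states with the same
signature. -/
def mzone (H : Set (UB S T)) (τ : T) (s : S) : Set S :=
  {s' | ubSig H τ s' = ubSig H τ s}

/-- The modular-induced zones for type `τ`. -/
def mzones (H : Set (UB S T)) (τ : T) : Set (Set S) :=
  {z | ∃ s, z = mzone H τ s}

/-- Number of officers ranked above `k` assigned to state `s`. -/
noncomputable def cntBefore (a : Fin n → S) (k : Fin n) (s : S) : ℕ :=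
  (Finset.univ.filter fun j => j < k ∧ a j = s).card

/-- Number of officers ranked above `k` counted by the upper-bound `h`. -/
noncomputable def cntBeforeUB (t : Fin n → T) (a : Fin n → S) (k : Fin n) (h : UB S T) : ℕ :=
  (Finset.univ.filter fun j => j < k ∧ a j ∈ h.states ∧ t j ∈ h.types).card

/-- Sequential solvency of the modular upper-bound system `H`. -/
def SeqSolvent (q : S → ℕ) (H : Set (UB S T)) (t : Fin n → T) : Prop :=
  ∀ (i : Fin n) (J : Finset (Fin n)) (b : Fin n → S), i ∉ J →
    (∀ s, (J.filter fun j => b j = s).card ≤ q s) →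
    (∀ h ∈ H, (J.filter fun j => b j ∈ h.states ∧ t j ∈ h.types).card ≤ h.cap) →
    ∃ s : S, (J.filter fun j => b j = s).card < q s ∧
      ∀ h ∈ H, s ∈ h.states → t i ∈ h.types →
        (J.filter fun j => b j ∈ h.states ∧ t j ∈ h.types).card < h.cap

/-- The modular-induced zonal message space: all messages that compare exactly the
states lying in a common zone of `Z`. -/
def zonalMsgs (Z : Set (Set S)) : Set (S → S → Prop) :=
  {r | IsMessage r ∧ ∀ s s',
      ((SameZone Z s s' ∧ s ≠ s') → (r s s' ∨ r s' s)) ∧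
      (¬ SameZone Z s s' → ¬ r s s' ∧ ¬ r s' s)}

/-- `rz` is a strict total order on the zones `Z`. -/
def StrictOrderOn (Z : Set (Set S)) (rz : Set S → Set S → Prop) : Prop :=
  (∀ z ∈ Z, ¬ rz z z) ∧
  (∀ z ∈ Z, ∀ z' ∈ Z, ∀ z'' ∈ Z, rz z z' → rz z' z'' → rz z z'') ∧
  (∀ z ∈ Z, ∀ z' ∈ Z, z ≠ z' → rz z z' ∨ rz z' z)

/-- Zone `z` is open for officer `k` given the assignment of higher-ranked officers:
some state of `z` has spare capacity and no upper-bound covering `k`'s type and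
meeting `z` is already binding. -/
def ZoneOpen (q : S → ℕ) (H : Set (UB S T)) (t : Fin n → T)
    (a : Fin n → S) (k : Fin n) (z : Set S) : Prop :=
  (∃ s ∈ z, cntBefore a k s < q s) ∧
  ∀ h ∈ H, t k ∈ h.types → (h.states ∩ z).Nonempty → cntBeforeUB t a k h < h.cap

/-- The outcome specification of the Modular Priority Mechanism: each officer is
assigned the message-greatest state with spare capacity in her exogenously first
open zone. -/
def MPMOutcome (q : S → ℕ) (H : Set (UB S T)) (t : Fin n → T)
    (zo : Fin n → Set S → Set S → Prop)
    (m : Fin n → S → S → Prop) (a : Fin n → S) : Prop :=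
  ∀ k : Fin n, ∃ z ∈ mzones H (t k),
    ZoneOpen q H t a k z ∧
    (∀ z' ∈ mzones H (t k), zo k z' z → ¬ ZoneOpen q H t a k z') ∧
    a k ∈ z ∧ cntBefore a k (a k) < q (a k) ∧
    ∀ s ∈ z, cntBefore a k s < q s → s ≠ a k → m k (a k) s

/-- Constrained Pareto efficiency with respect to the true preference profile `p`. -/
def ConstrainedPE (q : S → ℕ) (H : Set (UB S T)) (t : Fin n → T)
    (p : Fin n → S → S → Prop) (a : Fin n → S) : Prop :=
  Feasible q a ∧ RespectsUB H t a ∧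
  ¬ ∃ a' : Fin n → S, a' ≠ a ∧ Feasible q a' ∧ RespectsUB H t a' ∧
      ∀ i, p i (a' i) (a i) ∨ a' i = a i

end Modular

/-- `F_k`: the set of states with spare capacity for officer `k` for which no relevant
upper-bound is binding, given the assignments of higher-ranked officers. -/
def dynFeasSet {S T : Type*} {n : ℕ} (q : S → ℕ) (H : Set (UB S T)) (t : Fin n → T)
    (a : Fin n → S) (k : Fin n) : Set S :=
  {s | cntBefore a k s < q s ∧
       ∀ h ∈ H, s ∈ h.states → t k ∈ h.types → cntBeforeUB t a k h < h.cap}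

/-- The greedy (Dynamic Modular Priority) property: each officer receives her
most-preferred state in `F_k`. -/
def DMPGreedy {S T : Type*} {n : ℕ} (q : S → ℕ) (H : Set (UB S T)) (t : Fin n → T)
    (p : Fin n → S → S → Prop) (a : Fin n → S) : Prop :=
  ∀ k : Fin n, a k ∈ dynFeasSet q H t a k ∧
    ∀ s ∈ dynFeasSet q H t a k, s ≠ a k → p k (a k) s

section Stmt12Aux

variable {S T : Type*} [Fintype S] {n : ℕ}

lemma finsetMax (r : S → S → Prop)
    (htrans : ∀ s s' s'', r s s' → r s' s'' → r s s'')
    (htot : ∀ s s', s ≠ s' → r s s' ∨ r s' s) :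
    ∀ X : Finset S, X.Nonempty → ∃ s ∈ X, ∀ s' ∈ X, s' ≠ s → r s s' := by
  intro X
  induction X using Finset.induction_on with
  | empty => intro h; exact absurd h (by simp)
  | @insert b X hbX ih =>
    intro _
    by_cases hX : X.Nonempty
    · obtain ⟨m, hm, hmax⟩ := ih hX
      have hbm : b ≠ m := fun e => hbX (e ▸ hm)
      rcases htot b m hbm with h | h
      · refine ⟨b, Finset.mem_insert_self _ _, fun s' hs' hne' => ?_⟩
        rcases Finset.mem_insert.mp hs' with rfl | hs'X
        · exact absurd rfl hne'
        · by_cases hsm : s' = m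
          · exact hsm ▸ h
          · exact htrans _ _ _ h (hmax s' hs'X hsm)
      · refine ⟨m, Finset.mem_insert_of_mem hm, fun s' hs' hne' => ?_⟩
        rcases Finset.mem_insert.mp hs' with rfl | hs'X
        · exact h
        · exact hmax s' hs'X hne'
    · rw [Finset.not_nonempty_iff_eq_empty] at hX
      subst hX
      refine ⟨b, Finset.mem_insert_self _ _, fun s' hs' hne' => ?_⟩
      rcases Finset.mem_insert.mp hs' with rfl | hs'X
      · exact absurd rfl hne'
      · exact absurd hs'X (by simp)

lemma maxExists (r : S → S → Prop) (hr : IsStrictPref r) (X : Set S) (hX : X.Nonempty) :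
    ∃ s, s ∈ X ∧ ∀ s' ∈ X, s' ≠ s → r s s' := by
  classical
  obtain ⟨s, hs, hmax⟩ := finsetMax r hr.2.1 hr.2.2 (X.toFinite.toFinset)
    (by rwa [Set.Finite.toFinset_nonempty])
  exact ⟨s, (Set.Finite.mem_toFinset _).mp hs,
    fun s' hs' => hmax s' ((Set.Finite.mem_toFinset _).mpr hs')⟩

noncomputable def pickMax [Nonempty S] (r : S → S → Prop) (X : Set S) : S :=
  if h : ∃ s, s ∈ X ∧ ∀ s' ∈ X, s' ≠ s → r s s' then h.choose else Classical.arbitrary S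

lemma pickMax_spec [Nonempty S] (r : S → S → Prop) (X : Set S)
    (h : ∃ s, s ∈ X ∧ ∀ s' ∈ X, s' ≠ s → r s s') :
    pickMax r X ∈ X ∧ ∀ s' ∈ X, s' ≠ pickMax r X → r (pickMax r X) s' := by
  rw [pickMax, dif_pos h]
  exact h.choose_spec

noncomputable def dmpA [Nonempty S] (q : S → ℕ) (H : Set (UB S T)) (t : Fin n → T)
    (p : Fin n → S → S → Prop) : ℕ → Fin n → S
  | 0 => fun _ => Classical.arbitrary S
  | (k+1) => fun j =>
      if (j : ℕ) = k then pickMax (p j) (dynFeasSet q H t (dmpA q H t p k) j)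
      else dmpA q H t p k j

lemma dmpA_agree [Nonempty S] (q : S → ℕ) (H : Set (UB S T)) (t : Fin n → T)
    (p : Fin n → S → S → Prop) :
    ∀ m (j : Fin n), (j : ℕ) < m → dmpA q H t p m j = dmpA q H t p ((j : ℕ) + 1) j := by
  intro m
  induction m with
  | zero => intro j hj; omega
  | succ m ih =>
    intro j hj
    by_cases hjm : (j : ℕ) = m
    · rw [hjm]
    · have : (j : ℕ) < m := by omega
      rw [show dmpA q H t p (m+1) j = dmpA q H t p m j from if_neg hjm]
      exact ih j this

lemma cntBefore_congr {a b : Fin n → S} (k : Fin n) (hab : ∀ j, j < k → a j = b j) (s : S) :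
    cntBefore a k s = cntBefore b k s := by
  unfold cntBefore
  congr 1
  apply Finset.filter_congr
  intro j _
  constructor
  · rintro ⟨h1, h2⟩; exact ⟨h1, (hab j h1) ▸ h2⟩
  · rintro ⟨h1, h2⟩; exact ⟨h1, (hab j h1) ▸ h2⟩

lemma cntBeforeUB_congr {a b : Fin n → S} (t : Fin n → T) (k : Fin n)
    (hab : ∀ j, j < k → a j = b j) (h : UB S T) :
    cntBeforeUB t a k h = cntBeforeUB t b k h := by
  unfold cntBeforeUB
  congr 1
  apply Finset.filter_congr
  intro j _
  constructor
  · rintro ⟨h1, h2, h3⟩; exact ⟨h1, (hab j h1) ▸ h2, h3⟩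
  · rintro ⟨h1, h2, h3⟩; exact ⟨h1, (hab j h1) ▸ h2, h3⟩

lemma dynFeasSet_congr (q : S → ℕ) (H : Set (UB S T)) (t : Fin n → T)
    {a b : Fin n → S} (k : Fin n) (hab : ∀ j, j < k → a j = b j) :
    dynFeasSet q H t a k = dynFeasSet q H t b k := by
  unfold dynFeasSet
  ext s
  rw [Set.mem_setOf_eq, Set.mem_setOf_eq, cntBefore_congr k hab]
  constructor
  · rintro ⟨h1, h2⟩
    exact ⟨h1, fun h hh hs ht => (cntBeforeUB_congr t k hab h) ▸ h2 h hh hs ht⟩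
  · rintro ⟨h1, h2⟩
    exact ⟨h1, fun h hh hs ht => (cntBeforeUB_congr t k hab h) ▸ h2 h hh hs ht⟩

lemma prefixFeas (q : S → ℕ) (H : Set (UB S T)) (t : Fin n → T) (a : Fin n → S) :
    ∀ k : ℕ, (∀ j : Fin n, (j : ℕ) < k → a j ∈ dynFeasSet q H t a j) →
    (∀ s, ((Finset.univ.filter fun j : Fin n => (j : ℕ) < k ∧ a j = s)).card ≤ q s) ∧
    (∀ h ∈ H, ((Finset.univ.filter fun j : Fin n =>
        (j : ℕ) < k ∧ a j ∈ h.states ∧ t j ∈ h.types)).card ≤ h.cap) := by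
  intro k
  induction k with
  | zero =>
    intro _
    constructor
    · intro s; simp
    · intro h _; simp
  | succ k ih =>
    intro hmem
    have hmem' : ∀ j : Fin n, (j : ℕ) < k → a j ∈ dynFeasSet q H t a j :=
      fun j hj => hmem j (by omega)
    obtain ⟨ih1, ih2⟩ := ih hmem'
    by_cases hk : k < n
    · set K : Fin n := ⟨k, hk⟩ with hK
      have hKv : (K : ℕ) = k := rfl
      have hmemK := hmem K (by omega)
      have hlt : ∀ j : Fin n, (j < K) ↔ ((j : ℕ) < k) := fun j => Iff.rfl
      constructor
      · intro s
        by_cases has : a K = s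
        · have hcnt : cntBefore a K s < q s := has ▸ (hmemK).1
          have hcnt' : ((Finset.univ.filter fun j : Fin n =>
              (j : ℕ) < k ∧ a j = s)).card < q s := by
            have : cntBefore a K s = ((Finset.univ.filter fun j : Fin n =>
                (j : ℕ) < k ∧ a j = s)).card := by
              unfold cntBefore; rfl
            omega
          have hsub : (Finset.univ.filter fun j : Fin n => (j : ℕ) < k + 1 ∧ a j = s) ⊆
              insert K (Finset.univ.filter fun j : Fin n => (j : ℕ) < k ∧ a j = s) := by
            intro j hj
            simp only [Finset.mem_filter, Finset.mem_univ, true_and] at hj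
            rcases Nat.lt_succ_iff_lt_or_eq.mp hj.1 with h | h
            · exact Finset.mem_insert_of_mem (by
                simp only [Finset.mem_filter, Finset.mem_univ, true_and]
                exact ⟨h, hj.2⟩)
            · have : j = K := Fin.ext (hKv ▸ h)
              exact this ▸ Finset.mem_insert_self _ _
          calc ((Finset.univ.filter fun j : Fin n => (j : ℕ) < k + 1 ∧ a j = s)).card
              ≤ (insert K (Finset.univ.filter fun j : Fin n =>
                  (j : ℕ) < k ∧ a j = s)).card := Finset.card_le_card hsub
            _ ≤ ((Finset.univ.filter fun j : Fin n => (j : ℕ) < k ∧ a j = s)).card + 1 :=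
                Finset.card_insert_le _ _
            _ ≤ q s := hcnt'
        · have hsub : (Finset.univ.filter fun j : Fin n => (j : ℕ) < k + 1 ∧ a j = s) ⊆
              (Finset.univ.filter fun j : Fin n => (j : ℕ) < k ∧ a j = s) := by
            intro j hj
            simp only [Finset.mem_filter, Finset.mem_univ, true_and] at hj ⊢
            rcases Nat.lt_succ_iff_lt_or_eq.mp hj.1 with h | h
            · exact ⟨h, hj.2⟩
            · exact absurd (Fin.ext (hKv ▸ h) ▸ hj.2 : a K = s) has
          exact (Finset.card_le_card hsub).trans (ih1 s)
      · intro h hh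
        by_cases has : a K ∈ h.states ∧ t K ∈ h.types
        · have hcnt : cntBeforeUB t a K h < h.cap := (hmemK).2 h hh has.1 has.2
          have hcnt' : ((Finset.univ.filter fun j : Fin n =>
              (j : ℕ) < k ∧ a j ∈ h.states ∧ t j ∈ h.types)).card < h.cap := by
            have : cntBeforeUB t a K h = ((Finset.univ.filter fun j : Fin n =>
                (j : ℕ) < k ∧ a j ∈ h.states ∧ t j ∈ h.types)).card := by
              unfold cntBeforeUB; rfl
            omega
          have hsub : (Finset.univ.filter fun j : Fin n =>
              (j : ℕ) < k + 1 ∧ a j ∈ h.states ∧ t j ∈ h.types) ⊆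
              insert K (Finset.univ.filter fun j : Fin n =>
                (j : ℕ) < k ∧ a j ∈ h.states ∧ t j ∈ h.types) := by
            intro j hj
            simp only [Finset.mem_filter, Finset.mem_univ, true_and] at hj
            rcases Nat.lt_succ_iff_lt_or_eq.mp hj.1 with h' | h'
            · exact Finset.mem_insert_of_mem (by
                simp only [Finset.mem_filter, Finset.mem_univ, true_and]
                exact ⟨h', hj.2⟩)
            · exact (Fin.ext (hKv ▸ h') : j = K) ▸ Finset.mem_insert_self _ _
          calc ((Finset.univ.filter fun j : Fin n =>
                (j : ℕ) < k + 1 ∧ a j ∈ h.states ∧ t j ∈ h.types)).card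
              ≤ _ := Finset.card_le_card hsub
            _ ≤ ((Finset.univ.filter fun j : Fin n =>
                (j : ℕ) < k ∧ a j ∈ h.states ∧ t j ∈ h.types)).card + 1 :=
                Finset.card_insert_le _ _
            _ ≤ h.cap := hcnt'
        · have hsub : (Finset.univ.filter fun j : Fin n =>
              (j : ℕ) < k + 1 ∧ a j ∈ h.states ∧ t j ∈ h.types) ⊆
              (Finset.univ.filter fun j : Fin n =>
                (j : ℕ) < k ∧ a j ∈ h.states ∧ t j ∈ h.types) := by
            intro j hj
            simp only [Finset.mem_filter, Finset.mem_univ, true_and] at hj ⊢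
            rcases Nat.lt_succ_iff_lt_or_eq.mp hj.1 with h' | h'
            · exact ⟨h', hj.2⟩
            · exact absurd ((Fin.ext (hKv ▸ h') : j = K) ▸ hj.2) has
          exact (Finset.card_le_card hsub).trans (ih2 h hh)
    · have heq : ∀ j : Fin n, ((j : ℕ) < k + 1) ↔ ((j : ℕ) < k) := by
        intro j
        have := j.isLt
        omega
      constructor
      · intro s
        have : (Finset.univ.filter fun j : Fin n => (j : ℕ) < k + 1 ∧ a j = s) =
            (Finset.univ.filter fun j : Fin n => (j : ℕ) < k ∧ a j = s) := by
          apply Finset.filter_congr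
          intro j _
          rw [heq j]
        rw [this]; exact ih1 s
      · intro h hh
        have : (Finset.univ.filter fun j : Fin n =>
            (j : ℕ) < k + 1 ∧ a j ∈ h.states ∧ t j ∈ h.types) =
            (Finset.univ.filter fun j : Fin n =>
              (j : ℕ) < k ∧ a j ∈ h.states ∧ t j ∈ h.types) := by
          apply Finset.filter_congr
          intro j _
          rw [heq j]
        rw [this]; exact ih2 h hh

lemma feasNonempty (q : S → ℕ) (H : Set (UB S T)) (t : Fin n → T)
    (hsolv : SeqSolvent q H t) (a : Fin n → S) (k : Fin n)
    (hmem : ∀ j : Fin n, j < k → a j ∈ dynFeasSet q H t a j) :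
    (dynFeasSet q H t a k).Nonempty := by
  classical
  obtain ⟨hp1, hp2⟩ := prefixFeas q H t a (k : ℕ) (fun j hj => hmem j hj)
  set J : Finset (Fin n) := Finset.univ.filter (fun j => j < k) with hJ
  have hik : k ∉ J := by simp [hJ]
  obtain ⟨s, hs1, hs2⟩ := hsolv k J a hik
    (fun s => by
      have h1 := hp1 s
      convert h1 using 2
      all_goals
        ext j
        simp only [Finset.mem_filter, Finset.mem_univ, true_and, hJ, Fin.lt_def]
        try tauto)
    (fun h hh => by
      have h2 := hp2 h hh
      convert h2 using 2
      all_goals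
        ext j
        simp only [Finset.mem_filter, Finset.mem_univ, true_and, hJ, Fin.lt_def]
        try tauto)
  refine ⟨s, ?_, ?_⟩
  · show cntBefore a k s < q s
    unfold cntBefore
    convert hs1 using 2
    all_goals
      ext j
      simp only [Finset.mem_filter, Finset.mem_univ, true_and, hJ, Fin.lt_def]
      try tauto
  · intro h hh hsh hth
    have := hs2 h hh hsh hth
    show cntBeforeUB t a k h < h.cap
    unfold cntBeforeUB
    convert this using 2
    all_goals
      ext j
      simp only [Finset.mem_filter, Finset.mem_univ, true_and, hJ, Fin.lt_def]
      try tauto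

end Stmt12Aux

/-- under sequential solvency, the Dynamic Modular Priority Mechanism
outcome under truthful reporting exists; each `F_k` is nonempty, and the resulting
allocation is feasible, respects `H`, and is constrained Pareto efficient. -/
theorem stmt12 {S T : Type*} [Fintype S] {n : ℕ}
    (q : S → ℕ) (hq : n ≤ ∑ s, q s)
    (t : Fin n → T) (H : Set (UB S T)) (hH : UBSystem H)
    (hsolv : SeqSolvent q H t)
    (p : Fin n → S → S → Prop) (hp : ∀ i, IsStrictPref (p i)) :
    (∃ a : Fin n → S, DMPGreedy q H t p a) ∧
    ∀ a : Fin n → S, DMPGreedy q H t p a →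
      (∀ k : Fin n, (dynFeasSet q H t a k).Nonempty) ∧
      Feasible q a ∧ RespectsUB H t a ∧ ConstrainedPE q H t p a := by
  classical
  constructor
  · -- existence of a greedy allocation
    rcases Nat.eq_zero_or_pos n with hn | hn
    · subst hn
      exact ⟨fun i => i.elim0, fun k => k.elim0⟩
    · have hS : Nonempty S := by
        by_contra hS
        rw [not_nonempty_iff] at hS
        have hsum : ∑ s : S, q s = 0 := by
          rw [Finset.univ_eq_empty, Finset.sum_empty]
        omega
      set a : Fin n → S := dmpA q H t p n with ha
      have hagree : ∀ k : Fin n, ∀ j : Fin n, j < k → a j = dmpA q H t p (k : ℕ) j := by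
        intro k j hj
        rw [ha, dmpA_agree q H t p n j j.isLt, dmpA_agree q H t p (k : ℕ) j hj]
      have hFeq : ∀ k : Fin n,
          dynFeasSet q H t (dmpA q H t p (k : ℕ)) k = dynFeasSet q H t a k :=
        fun k => dynFeasSet_congr q H t k (fun j hj => (hagree k j hj).symm)
      have hstep : ∀ k : Fin n, a k = pickMax (p k) (dynFeasSet q H t a k) := by
        intro k
        rw [ha, dmpA_agree q H t p n k k.isLt]
        have h1 : dmpA q H t p ((k : ℕ) + 1) k =
            pickMax (p k) (dynFeasSet q H t (dmpA q H t p (k : ℕ)) k) := if_pos rfl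
        rw [h1, hFeq k]
      have key : ∀ N : ℕ, ∀ k : Fin n, (k : ℕ) < N →
          (a k ∈ dynFeasSet q H t a k ∧
            ∀ s ∈ dynFeasSet q H t a k, s ≠ a k → p k (a k) s) := by
        intro N
        induction N with
        | zero => intro k hk; omega
        | succ N ih =>
          intro k hk
          have ihk : ∀ j : Fin n, j < k → a j ∈ dynFeasSet q H t a j :=
            fun j hj => (ih j (by have := Fin.lt_def.mp hj; omega)).1
          have hne := feasNonempty q H t hsolv a k ihk
          have hmax := maxExists (p k) (hp k) _ hne
          have hs := pickMax_spec (p k) (dynFeasSet q H t a k) hmax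
          rw [← hstep k] at hs
          exact hs
      exact ⟨a, fun k => key n k k.isLt⟩
  · -- properties of any greedy allocation
    intro a ha
    have hfeas : Feasible q a := by
      intro s
      have h1 := (prefixFeas q H t a n (fun j _ => (ha j).1)).1 s
      convert h1 using 2
      all_goals
        ext j
        simp only [Finset.mem_filter, Finset.mem_univ, true_and]
        exact ⟨fun h => ⟨j.isLt, h⟩, fun h => h.2⟩
    have hresp : RespectsUB H t a := by
      intro h hh
      have h1 := (prefixFeas q H t a n (fun j _ => (ha j).1)).2 h hh
      convert h1 using 2
      all_goals
        ext j
        simp only [Finset.mem_filter, Finset.mem_univ, true_and]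
        exact ⟨fun h => ⟨j.isLt, h⟩, fun h => h.2⟩
    refine ⟨fun k => ⟨a k, (ha k).1⟩, hfeas, hresp, hfeas, hresp, ?_⟩
    rintro ⟨a', hne, hfeas', hresp', himp⟩
    have hD : (Finset.univ.filter fun i => a' i ≠ a i).Nonempty := by
      by_contra hc
      rw [Finset.not_nonempty_iff_eq_empty, Finset.filter_eq_empty_iff] at hc
      exact hne (funext fun i => not_not.mp (hc (Finset.mem_univ i)))
    set i := (Finset.univ.filter fun i => a' i ≠ a i).min' hD with hi_def
    have hi : a' i ≠ a i := by
      have := Finset.min'_mem _ hD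
      rw [← hi_def] at this
      simpa using this
    have hmin : ∀ j, j < i → a' j = a j := by
      intro j hj
      by_contra hc
      have hji : i ≤ j := by
        rw [hi_def]
        exact Finset.min'_le _ j (by simpa using hc)
      exact absurd hj (not_lt.mpr hji)
    have hmem : a' i ∈ dynFeasSet q H t a i := by
      constructor
      · have hnotmem : i ∉ (Finset.univ.filter fun j => j < i ∧ a j = a' i) := by simp
        have hsub : insert i (Finset.univ.filter fun j => j < i ∧ a j = a' i) ⊆
            Finset.univ.filter fun j => a' j = a' i := by
          intro j hj
          rcases Finset.mem_insert.mp hj with rfl | hj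
          · simp
          · simp only [Finset.mem_filter, Finset.mem_univ, true_and] at hj ⊢
            rw [hmin j hj.1]; exact hj.2
        have h1 : (Finset.univ.filter fun j => j < i ∧ a j = a' i).card + 1 ≤ q (a' i) := by
          rw [← Finset.card_insert_of_notMem hnotmem]
          exact (Finset.card_le_card hsub).trans (hfeas' (a' i))
        show cntBefore a i (a' i) < q (a' i)
        unfold cntBefore
        omega
      · intro h hh hsh hth
        have hnotmem : i ∉ (Finset.univ.filter
            fun j => j < i ∧ a j ∈ h.states ∧ t j ∈ h.types) := by simp
        have hsub : insert i (Finset.univ.filter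
            fun j => j < i ∧ a j ∈ h.states ∧ t j ∈ h.types) ⊆
            Finset.univ.filter fun j => a' j ∈ h.states ∧ t j ∈ h.types := by
          intro j hj
          rcases Finset.mem_insert.mp hj with rfl | hj
          · simp only [Finset.mem_filter, Finset.mem_univ, true_and]
            exact ⟨hsh, hth⟩
          · simp only [Finset.mem_filter, Finset.mem_univ, true_and] at hj ⊢
            rw [hmin j hj.1]; exact ⟨hj.2.1, hj.2.2⟩
        have h1 : (Finset.univ.filter
            fun j => j < i ∧ a j ∈ h.states ∧ t j ∈ h.types).card + 1 ≤ h.cap := by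
          rw [← Finset.card_insert_of_notMem hnotmem]
          exact (Finset.card_le_card hsub).trans (hresp' h hh)
        show cntBeforeUB t a i h < h.cap
        unfold cntBeforeUB
        omega
    have hpai := (ha i).2 (a' i) hmem hi
    rcases himp i with h | h
    · exact (hp i).1 _ _ hpai h
    · exact hi h
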